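/- Let L, N ≥ 1 be integers and σ² > 0. Let C_H be an L×L Hermitian positive semidefinite complex matrix with spectral decomposition C_H = V^H·diag(λ₁,…,λ_L)·V, where V is unitary and λ_k ≥ 0. Let Y₁, Y₂ ∈ ℂ^{L×N}. For F ∈ ℂ, v ≥ 0 and 1 ≤ k ≤ L, define C_k(F, v) = [[v·λ_k + σ², v·λ_k·conj(F)], [v·λ_k·F, v·λ_k·|F|² + σ²]] and the 2×2 Hermitian matrix S_k with (i,j) entry (1/N)·(V·Y_i·Y_j^H·V^H)_{kk}, and define the likelihood P(F, v) = Π_{k=1}^{L} det(π·C_k(F, v))^(−N)·exp(−N·Re(Tr(S_k·C_k(F, v)⁻¹))). For μ ≥ 0 define the 2×2 Hermitian matrix S(μ) with entries S(μ)ᵢⱼ = (1/N)·Tr(μ·C_H·(μ·C_H + σ²·I_L)⁻¹·Y_i·Y_j^H), let η(μ) be the largest eigenvalue of S(μ), and let G(μ) = η(μ) − σ²·log(det(μ·C_H + σ²·I_L)). Suppose μ̂ ≥ 0 satisfies G(μ̂) ≥ G(μ) for all μ ≥ 0, and let (E₁, E₂) be a unit eigenvector of S(μ̂) for η(μ̂)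 with E₁ ≠ 0. Then F̂ = E₂/E₁ and v̂ = |E₁|²·μ̂ satisfy P(F̂, v̂) ≥ P(F, v) for all F ∈ ℂ and all v ≥ 0. -/

import Mathlib

open Complex Matrix Real
open scoped ComplexOrder

/-!
Write `u = (1, F)` and `μ = v (1 + |F|²)`. Each `C_k(F, v) = σ² I + v λ_k u uᴴ` is a rank-one
update, with determinant `σ² (σ² + μ λ_k)` and an inverse given by Sherman–Morrison; moreover
`V` diagonalises `μ C_H (μ C_H + σ² I)⁻¹`, so `S(μ) = Σ_k μλ_k/(μλ_k + σ²) S_k`. Together these give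
`log P(F, v) = K + (N/σ²) (uᴴ S(μ) u / uᴴ u − σ² log det(μ C_H + σ² I))` with `K` independent
of `(F, v)`. The Rayleigh quotient is at most `η(μ)`, hence `log P(F, v) ≤ K + (N/σ²) G(μ)
≤ K + (N/σ²) G(μ̂)`, and `(F̂, v̂)` attains this bound: `(1, F̂)` is an eigenvector of `S(μ̂)` for
`η(μ̂)`, and `v̂ (1 + |F̂|²) = μ̂` because `|E₁|² + |E₂|² = 1`.
-/

namespace Matrix

section UnitaryConj

variable {n K : Type*} [Fintype n] [DecidableEq n] [Field K] [StarRing K] {V : Matrix n n K}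

theorem conjTranspose_mul_diagonal_mul_mul_conjTranspose_mul_diagonal_mul (hV : V * Vᴴ = 1)
    (d e : n → K) :
    Vᴴ * diagonal d * V * (Vᴴ * diagonal e * V) = Vᴴ * diagonal (d * e) * V := by
  rw [show Vᴴ * diagonal d * V * (Vᴴ * diagonal e * V)
      = Vᴴ * diagonal d * (V * Vᴴ) * diagonal e * V by simp only [Matrix.mul_assoc],
    hV, Matrix.mul_one, Matrix.mul_assoc Vᴴ, diagonal_mul_diagonal']
  rfl

theorem inv_conjTranspose_mul_diagonal_mul (hV : V * Vᴴ = 1) {d : n → K} (hd : ∀ i, d i ≠ 0) :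
    (Vᴴ * diagonal d * V)⁻¹ = Vᴴ * diagonal d⁻¹ * V := by
  have hdiag : (diagonal d)⁻¹ = diagonal d⁻¹ := by
    refine inv_eq_right_inv ?_
    rw [diagonal_mul_diagonal, ← diagonal_one]
    exact congrArg diagonal (funext fun i => mul_inv_cancel₀ (hd i))
  rw [Matrix.mul_inv_rev, Matrix.mul_inv_rev, inv_eq_right_inv hV, inv_eq_left_inv hV, hdiag,
    Matrix.mul_assoc]

theorem det_conjTranspose_mul_diagonal_mul (hV' : Vᴴ * V = 1) (d : n → K) :
    (Vᴴ * diagonal d * V).det = ∏ i, d i := by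
  rw [det_mul, det_mul, mul_right_comm, ← det_mul, hV', det_one, one_mul, det_diagonal]

theorem smul_conjTranspose_mul_diagonal_mul_add_smul_one (hV' : Vᴴ * V = 1) (a b : K)
    (d : n → K) :
    a • (Vᴴ * diagonal d * V) + b • (1 : Matrix n n K)
      = Vᴴ * diagonal (fun i => a * d i + b) * V := by
  have hdiag : diagonal (fun i => a * d i + b) = a • diagonal d + b • 1 := by
    ext i j
    by_cases h : i = j <;> simp [h, diagonal]
  rw [hdiag, Matrix.mul_add, Matrix.add_mul, Matrix.mul_smul, Matrix.smul_mul, Matrix.mul_smul,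
    Matrix.smul_mul, Matrix.mul_one, hV']

theorem trace_conjTranspose_mul_diagonal_mul_mul (d : n → K) (M : Matrix n n K) :
    (Vᴴ * diagonal d * V * M).trace = ∑ i, d i * (V * M * Vᴴ) i i := by
  rw [Matrix.mul_assoc, Matrix.mul_assoc, trace_mul_comm]
  simp [trace, diagonal_mul, Matrix.mul_assoc]

end UnitaryConj

section RankOneUpdate

variable {n : Type*} [Fintype n]

theorem trace_mul_vecMulVec {R : Type*} [CommSemiring R] (S : Matrix n n R) (u w : n → R) :
    (S * vecMulVec u w).trace = w ⬝ᵥ S *ᵥ u := by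
  rw [mul_vecMulVec, trace_vecMulVec, dotProduct_comm]

variable [DecidableEq n] {K : Type*} [Field K]

theorem inv_smul_one_add_smul_vecMulVec {s c : K} (u w : n → K) (hs : s ≠ 0)
    (h : s + c * (w ⬝ᵥ u) ≠ 0) :
    (s • 1 + c • vecMulVec u w)⁻¹ = s⁻¹ • (1 - (c / (s + c * (w ⬝ᵥ u))) • vecMulVec u w) := by
  refine inv_eq_right_inv ?_
  have hP : vecMulVec u w * vecMulVec u w = (w ⬝ᵥ u) • vecMulVec u w := by
    rw [vecMulVec_mul_vecMulVec, vecMulVec_smul]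
  simp only [Matrix.add_mul, Matrix.mul_sub, Matrix.smul_mul, Matrix.mul_smul, Matrix.one_mul,
    Matrix.mul_one, hP]
  match_scalars <;> field_simp; ring

theorem trace_mul_inv_smul_one_add_smul_vecMulVec {s c : K} (S : Matrix n n K) (u w : n → K)
    (hs : s ≠ 0) (h : s + c * (w ⬝ᵥ u) ≠ 0) :
    (S * (s • 1 + c • vecMulVec u w)⁻¹).trace
      = s⁻¹ * (S.trace - c / (s + c * (w ⬝ᵥ u)) * (w ⬝ᵥ S *ᵥ u)) := by
  rw [inv_smul_one_add_smul_vecMulVec u w hs h, Matrix.mul_smul, Matrix.mul_sub,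
    Matrix.mul_smul, Matrix.mul_one, trace_smul, trace_sub, trace_smul, trace_mul_vecMulVec,
    smul_eq_mul, smul_eq_mul]

theorem det_smul_one_add_smul_vecMulVec_fin_two (s c : K) (u w : Fin 2 → K) :
    (s • 1 + c • vecMulVec u w).det = s * (s + c * (w ⬝ᵥ u)) := by
  simp [det_fin_two, vecMulVec_apply, dotProduct, Fin.sum_univ_two]
  ring

end RankOneUpdate

theorem IsHermitian.re_dotProduct_mulVec_le {n 𝕜 : Type*} [Fintype n] [DecidableEq n] [RCLike 𝕜]
    {S : Matrix n n 𝕜} (hS : S.IsHermitian) {e : ℝ}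
    (he : ∀ t : ℝ, (∃ x : n → 𝕜, x ≠ 0 ∧ S *ᵥ x = (t : 𝕜) • x) → t ≤ e) (x : n → 𝕜) :
    RCLike.re (star x ⬝ᵥ S *ᵥ x) ≤ e * RCLike.re (star x ⬝ᵥ x) := by
  have hM : ((e : 𝕜) • 1 - S).IsHermitian :=
    ((isHermitian_one.smul (RCLike.conj_ofReal e))).sub hS
  have hpsd : ((e : 𝕜) • 1 - S).PosSemidef := by
    refine hM.posSemidef_iff_eigenvalues_nonneg.mpr fun i => ?_
    have hev := hM.mulVec_eigenvectorBasis i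
    rw [sub_mulVec, smul_mulVec, one_mulVec, RCLike.real_smul_eq_coe_smul (K := 𝕜),
      sub_eq_iff_eq_add, ← sub_eq_iff_eq_add', ← sub_smul, ← RCLike.ofReal_sub] at hev
    have := he _ ⟨_, (WithLp.ofLp_eq_zero 2).ne.2 (hM.eigenvectorBasis.orthonormal.ne_zero i),
      hev.symm⟩
    exact sub_le_self_iff _ |>.mp this
  have h := hpsd.re_dotProduct_nonneg x
  rwa [sub_mulVec, dotProduct_sub, smul_mulVec, one_mulVec, dotProduct_smul, map_sub,
    smul_eq_mul, RCLike.re_ofReal_mul, sub_nonneg] at h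

theorem star_mul_mul_conjTranspose_mul_conjTranspose_apply {l m p R : Type*} [Fintype m]
    [Fintype p] [Semiring R] [StarRing R] (W : Matrix l m R) (A B : Matrix m p R) (k : l) :
    star ((W * (A * Bᴴ) * Wᴴ) k k) = (W * (B * Aᴴ) * Wᴴ) k k := by
  rw [← conjTranspose_apply]
  simp only [conjTranspose_mul, conjTranspose_conjTranspose, Matrix.mul_assoc]

end Matrix

theorem star_dotProduct_self_vecCons_one (F : ℂ) :
    star ![1, F] ⬝ᵥ ![1, F] = ((1 + ‖F‖ ^ 2 : ℝ) : ℂ) := by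
  simp [dotProduct, Fin.sum_univ_two, ← Complex.conj_mul', mul_comm]

theorem Real.zpow_neg_natCast_eq_exp_mul_log {x : ℝ} (hx : 0 < x) (N : ℕ) :
    x ^ (-(N : ℤ)) = Real.exp (-(N : ℝ) * Real.log x) := by
  rw [← Real.exp_log (zpow_pos hx _), Real.log_zpow]
  push_cast
  rfl

theorem covariance_eq_smul_one_add_smul_vecMulVec (v l σ2 : ℝ) (F : ℂ) :
    !![(v : ℂ) * (l : ℂ) + (σ2 : ℂ), (v : ℂ) * (l : ℂ) * (starRingEnd ℂ) F;
       (v : ℂ) * (l : ℂ) * F, (v : ℂ) * (l : ℂ) * ((‖F‖ : ℝ) : ℂ) ^ 2 + (σ2 : ℂ)]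
      = (σ2 : ℂ) • 1 + ((v * l : ℝ) : ℂ) • vecMulVec ![1, F] (star ![1, F]) := by
  ext i j
  rw [Matrix.add_apply, Matrix.smul_apply, Matrix.smul_apply, vecMulVec_apply]
  fin_cases i <;> fin_cases j <;> simp [← Complex.mul_conj'] <;> ring

theorem likelihoodFactor_eq (N : ℕ) {σ2 c : ℝ} (hσ : 0 < σ2) (hc : 0 ≤ c) (F : ℂ)
    (S : Matrix (Fin 2) (Fin 2) ℂ) :
    (((π : ℂ) • ((σ2 : ℂ) • 1 + (c : ℂ) • vecMulVec ![1, F] (star ![1, F]))).det.re)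
        ^ (-(N : ℤ))
      * Real.exp (-(N : ℝ)
          * (S * ((σ2 : ℂ) • 1 + (c : ℂ) • vecMulVec ![1, F] (star ![1, F]))⁻¹).trace.re)
    = Real.exp (-(N : ℝ) * (Real.log (π ^ 2 * σ2) + S.trace.re / σ2)
        + N / σ2 * (c * (star ![1, F] ⬝ᵥ S *ᵥ ![1, F]).re / (c * (1 + ‖F‖ ^ 2) + σ2)
          - σ2 * Real.log (c * (1 + ‖F‖ ^ 2) + σ2))) := by
  have hD : 0 < c * (1 + ‖F‖ ^ 2) + σ2 := by positivity
  have hdet : ((π : ℂ) • ((σ2 : ℂ) • 1 + (c : ℂ) • vecMulVec ![1, F] (star ![1, F]))).det.re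
      = π ^ 2 * σ2 * (c * (1 + ‖F‖ ^ 2) + σ2) := by
    rw [det_smul, det_smul_one_add_smul_vecMulVec_fin_two, star_dotProduct_self_vecCons_one,
      Fintype.card_fin, ← Complex.ofReal_re (π ^ 2 * σ2 * (c * (1 + ‖F‖ ^ 2) + σ2))]
    push_cast
    ring_nf
  have htr : (S * ((σ2 : ℂ) • 1 + (c : ℂ) • vecMulVec ![1, F] (star ![1, F]))⁻¹).trace.re
      = S.trace.re / σ2
        - c * (star ![1, F] ⬝ᵥ S *ᵥ ![1, F]).re / (σ2 * (c * (1 + ‖F‖ ^ 2) + σ2)) := by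
    rw [trace_mul_inv_smul_one_add_smul_vecMulVec _ _ _ (by exact_mod_cast hσ.ne'),
      star_dotProduct_self_vecCons_one]
    · rw [show ((σ2 : ℂ))⁻¹ * (S.trace - c / (σ2 + c * ((1 + ‖F‖ ^ 2 : ℝ) : ℂ))
            * (star ![1, F] ⬝ᵥ S *ᵥ ![1, F]))
          = ((σ2⁻¹ : ℝ) : ℂ) * S.trace
            - ((c / (σ2 * (c * (1 + ‖F‖ ^ 2) + σ2)) : ℝ) : ℂ)
              * (star ![1, F] ⬝ᵥ S *ᵥ ![1, F]) by
          push_cast; field_simp; ring]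
      rw [Complex.sub_re, Complex.re_ofReal_mul, Complex.re_ofReal_mul]
      field_simp
    · rw [star_dotProduct_self_vecCons_one]
      exact_mod_cast (by positivity : σ2 + c * (1 + ‖F‖ ^ 2) ≠ 0)
  rw [hdet, htr, Real.zpow_neg_natCast_eq_exp_mul_log (by positivity), ← Real.exp_add,
    Real.log_mul (by positivity) hD.ne']
  field_simp
  congr 1
  ring

/-- The eigenvalues of `μ C_H (μ C_H + σ² I)⁻¹` in terms of those of `C_H`. -/
noncomputable def wienerGain (σ2 μ l : ℝ) : ℝ := μ * l / (μ * l + σ2)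

theorem re_dotProduct_sum_smul_mulVec {ι n : Type*} [Fintype ι] [Fintype n] (x : n → ℂ)
    (r : ι → ℝ) (S : ι → Matrix n n ℂ) :
    (star x ⬝ᵥ (∑ k, (r k : ℂ) • S k) *ᵥ x).re = ∑ k, r k * (star x ⬝ᵥ S k *ᵥ x).re := by
  simp [sum_mulVec, dotProduct_sum, smul_mulVec, dotProduct_smul, Complex.re_sum]

theorem prod_likelihoodFactor_eq {ι : Type*} [Fintype ι] (N : ℕ) {σ2 : ℝ} (hσ : 0 < σ2)
    {lam : ι → ℝ} (hlam : ∀ k, 0 ≤ lam k) (S : ι → Matrix (Fin 2) (Fin 2) ℂ) (F : ℂ) {v : ℝ}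
    (hv : 0 ≤ v) :
    ∏ k, ((((π : ℂ) • ((σ2 : ℂ) • 1
            + ((v * lam k : ℝ) : ℂ) • vecMulVec ![1, F] (star ![1, F]))).det.re) ^ (-(N : ℤ))
        * Real.exp (-(N : ℝ) * (S k * ((σ2 : ℂ) • 1
            + ((v * lam k : ℝ) : ℂ) • vecMulVec ![1, F] (star ![1, F]))⁻¹).trace.re))
      = Real.exp (∑ k, -(N : ℝ) * (Real.log (π ^ 2 * σ2) + (S k).trace.re / σ2)
          + N / σ2 * ((star ![1, F] ⬝ᵥ (∑ k, (wienerGain σ2 (v * (1 + ‖F‖ ^ 2)) (lam k) : ℂ)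
                • S k) *ᵥ ![1, F]).re / (1 + ‖F‖ ^ 2)
            - σ2 * ∑ k, Real.log (v * (1 + ‖F‖ ^ 2) * lam k + σ2))) := by
  simp_rw [likelihoodFactor_eq N hσ (mul_nonneg hv (hlam _))]
  rw [← Real.exp_sum, re_dotProduct_sum_smul_mulVec, Finset.sum_div, Finset.mul_sum,
    ← Finset.sum_sub_distrib, Finset.mul_sum, ← Finset.sum_add_distrib]
  refine congrArg Real.exp (Finset.sum_congr rfl fun k _ => ?_)
  have hq : 0 < 1 + ‖F‖ ^ 2 := by positivity
  have hD : 0 < v * (1 + ‖F‖ ^ 2) * lam k + σ2 := by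
    have := hlam k; positivity
  rw [wienerGain, show v * lam k * (1 + ‖F‖ ^ 2) = v * (1 + ‖F‖ ^ 2) * lam k by ring]
  field_simp

theorem re_star_dotProduct_mulVec_div_le_of_isHermitian {S : Matrix (Fin 2) (Fin 2) ℂ}
    (hS : S.IsHermitian) {e : ℝ}
    (he : ∀ t : ℝ, (∃ x : Fin 2 → ℂ, x ≠ 0 ∧ S *ᵥ x = (t : ℂ) • x) → t ≤ e) (F : ℂ) :
    (star ![1, F] ⬝ᵥ S *ᵥ ![1, F]).re / (1 + ‖F‖ ^ 2) ≤ e := by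
  have := hS.re_dotProduct_mulVec_le he ![1, F]
  rw [star_dotProduct_self_vecCons_one, RCLike.re_to_complex, RCLike.re_to_complex,
    Complex.ofReal_re] at this
  exact (div_le_iff₀ (by positivity)).mpr this

theorem re_star_dotProduct_mulVec_div_eq_of_mulVec_eq {S : Matrix (Fin 2) (Fin 2) ℂ} {t : ℝ}
    {E₁ E₂ : ℂ} (hE₁ : E₁ ≠ 0) (hev : S *ᵥ ![E₁, E₂] = (t : ℂ) • ![E₁, E₂]) :
    (star ![1, E₂ / E₁] ⬝ᵥ S *ᵥ ![1, E₂ / E₁]).re / (1 + ‖E₂ / E₁‖ ^ 2) = t := by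
  have hvec : ![1, E₂ / E₁] = E₁⁻¹ • ![E₁, E₂] := by
    ext i; fin_cases i <;> simp [hE₁, div_eq_inv_mul]
  rw [hvec, mulVec_smul, hev, smul_comm, ← hvec, dotProduct_smul, smul_eq_mul,
    Complex.re_ofReal_mul, star_dotProduct_self_vecCons_one, Complex.ofReal_re,
    mul_div_cancel_right₀ _ (by positivity)]

theorem norm_sq_mul_mul_one_add_norm_div_sq {E₁ E₂ : ℂ} (hE₁ : E₁ ≠ 0)
    (hunit : ‖E₁‖ ^ 2 + ‖E₂‖ ^ 2 = 1) (μ : ℝ) :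
    ‖E₁‖ ^ 2 * μ * (1 + ‖E₂ / E₁‖ ^ 2) = μ := by
  have : ‖E₁‖ ≠ 0 := norm_ne_zero_iff.mpr hE₁
  rw [norm_div]
  field_simp
  linear_combination μ * hunit

section Correlation

variable {n : Type*} [Fintype n] [DecidableEq n] {CH V : Matrix n n ℂ} {lam : n → ℝ}

theorem trace_smul_mul_inv_smul_add_smul_one_mul (hV : V * Vᴴ = 1) (hV' : Vᴴ * V = 1)
    (hdecomp : CH = Vᴴ * diagonal (fun k => ((lam k : ℝ) : ℂ)) * V) {σ2 μ : ℝ}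
    (h : ∀ k, μ * lam k + σ2 ≠ 0) (M : Matrix n n ℂ) :
    ((μ : ℂ) • CH * ((μ : ℂ) • CH + (σ2 : ℂ) • 1)⁻¹ * M).trace
      = ∑ k, (wienerGain σ2 μ (lam k) : ℂ) * (V * M * Vᴴ) k k := by
  have hCH : (μ : ℂ) • CH = Vᴴ * diagonal (fun k => (μ : ℂ) * lam k) * V := by
    simpa [hdecomp] using
      smul_conjTranspose_mul_diagonal_mul_add_smul_one hV' (μ : ℂ) 0 (fun k => (lam k : ℂ))
  rw [hdecomp, smul_conjTranspose_mul_diagonal_mul_add_smul_one hV', ← hdecomp, hCH,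
    inv_conjTranspose_mul_diagonal_mul hV (fun k => by exact_mod_cast h k),
    conjTranspose_mul_diagonal_mul_mul_conjTranspose_mul_diagonal_mul hV,
    trace_conjTranspose_mul_diagonal_mul_mul]
  refine Finset.sum_congr rfl fun k _ => ?_
  simp [wienerGain, div_eq_mul_inv]

theorem re_det_smul_add_smul_one (hV' : Vᴴ * V = 1)
    (hdecomp : CH = Vᴴ * diagonal (fun k => ((lam k : ℝ) : ℂ)) * V) (μ σ2 : ℝ) :
    ((μ : ℂ) • CH + (σ2 : ℂ) • 1).det.re = ∏ k, (μ * lam k + σ2) := by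
  rw [hdecomp, smul_conjTranspose_mul_diagonal_mul_add_smul_one hV',
    det_conjTranspose_mul_diagonal_mul hV', ← Complex.ofReal_re (∏ k, (μ * lam k + σ2))]
  push_cast
  rfl

end Correlation

theorem stmt11_general (L N : ℕ) (σ2 : ℝ) (hσ : 0 < σ2)
    (CH : Matrix (Fin L) (Fin L) ℂ)
    (V : Matrix (Fin L) (Fin L) ℂ) (hV : V * Vᴴ = 1) (hV' : Vᴴ * V = 1)
    (lam : Fin L → ℝ) (hlam : ∀ k, 0 ≤ lam k)
    (hdecomp : CH = Vᴴ * Matrix.diagonal (fun k => ((lam k : ℝ) : ℂ)) * V)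
    (Y₁ Y₂ : Matrix (Fin L) (Fin N) ℂ)
    (Ck : ℂ → ℝ → Fin L → Matrix (Fin 2) (Fin 2) ℂ)
    (hCk : ∀ F v k, Ck F v k =
      !![(v : ℂ) * (lam k : ℂ) + (σ2 : ℂ), (v : ℂ) * (lam k : ℂ) * (starRingEnd ℂ) F;
         (v : ℂ) * (lam k : ℂ) * F, (v : ℂ) * (lam k : ℂ) * ((‖F‖ : ℝ) : ℂ) ^ 2 + (σ2 : ℂ)])
    (Sk : Fin L → Matrix (Fin 2) (Fin 2) ℂ)
    (hSk : ∀ k i j, Sk k i j =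
      ((N : ℂ))⁻¹ * (V * (![Y₁, Y₂] i * (![Y₁, Y₂] j)ᴴ) * Vᴴ) k k)
    (P : ℂ → ℝ → ℝ)
    (hP : ∀ F v, P F v = ∏ k,
        ((((π : ℂ) • Ck F v k).det.re) ^ (-(N : ℤ))
          * Real.exp (-(N : ℝ) * ((Sk k * (Ck F v k)⁻¹).trace).re)))
    (Smat : ℝ → Matrix (Fin 2) (Fin 2) ℂ)
    (hSmat : ∀ μ i j, Smat μ i j =
      ((N : ℂ))⁻¹ * (((μ : ℝ) : ℂ) • CH
          * (((μ : ℝ) : ℂ) • CH + ((σ2 : ℝ) : ℂ) • (1 : Matrix (Fin L) (Fin L) ℂ))⁻¹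
          * (![Y₁, Y₂] i * (![Y₁, Y₂] j)ᴴ)).trace)
    (η : ℝ → ℝ)
    (hη : ∀ μ : ℝ, 0 ≤ μ →
      (∃ x : Fin 2 → ℂ, x ≠ 0 ∧ (Smat μ).mulVec x = ((η μ : ℝ) : ℂ) • x) ∧
      (∀ t : ℝ, (∃ x : Fin 2 → ℂ, x ≠ 0 ∧ (Smat μ).mulVec x = ((t : ℝ) : ℂ) • x) → t ≤ η μ))
    (G : ℝ → ℝ)
    (hG : ∀ μ : ℝ, G μ = η μ
        - σ2 * Real.log ((((μ : ℝ) : ℂ) • CH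
            + ((σ2 : ℝ) : ℂ) • (1 : Matrix (Fin L) (Fin L) ℂ)).det.re))
    (μhat : ℝ) (hμhat : 0 ≤ μhat) (hopt : ∀ μ : ℝ, 0 ≤ μ → G μ ≤ G μhat)
    (E₁ E₂ : ℂ) (hE₁ : E₁ ≠ 0)
    (hunit : ‖E₁‖ ^ 2 + ‖E₂‖ ^ 2 = 1)
    (hev : (Smat μhat).mulVec ![E₁, E₂] = ((η μhat : ℝ) : ℂ) • ![E₁, E₂]) :
    ∀ F : ℂ, ∀ v : ℝ, 0 ≤ v →
      P F v ≤ P (E₂ / E₁) (‖E₁‖ ^ 2 * μhat) := by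
  have hden : ∀ μ, 0 ≤ μ → ∀ k, 0 < μ * lam k + σ2 := fun μ hμ k =>
    add_pos_of_nonneg_of_pos (mul_nonneg hμ (hlam k)) hσ
  have hSk_herm : ∀ k, (Sk k).IsHermitian := fun k => by
    ext i j
    rw [conjTranspose_apply, hSk, hSk, star_mul', star_mul_mul_conjTranspose_mul_conjTranspose_apply]
    simp
  have hSmat_eq : ∀ μ, 0 ≤ μ → Smat μ = ∑ k, (wienerGain σ2 μ (lam k) : ℂ) • Sk k :=
    fun μ hμ => by
    ext i j
    rw [hSmat, trace_smul_mul_inv_smul_add_smul_one_mul hV hV' hdecomp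
      (fun k => (hden μ hμ k).ne'), Matrix.sum_apply, Finset.mul_sum]
    refine Finset.sum_congr rfl fun k _ => ?_
    rw [Matrix.smul_apply, hSk, smul_eq_mul]
    ring
  have hG_eq : ∀ μ, 0 ≤ μ → G μ = η μ - σ2 * ∑ k, Real.log (μ * lam k + σ2) := fun μ hμ => by
    rw [hG, re_det_smul_add_smul_one hV' hdecomp, Real.log_prod fun k _ => (hden μ hμ k).ne']
  obtain ⟨K, hP_eq⟩ : ∃ K : ℝ, ∀ F v, 0 ≤ v → P F v = Real.exp (K + N / σ2 *
      ((star ![1, F] ⬝ᵥ Smat (v * (1 + ‖F‖ ^ 2)) *ᵥ ![1, F]).re / (1 + ‖F‖ ^ 2)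
        - σ2 * ∑ k, Real.log (v * (1 + ‖F‖ ^ 2) * lam k + σ2))) := ⟨_, fun F v hv => by
    simp_rw [hP, hCk, covariance_eq_smul_one_add_smul_vecMulVec]
    rw [prod_likelihoodFactor_eq N hσ hlam Sk F hv, hSmat_eq _ (by positivity)]⟩
  intro F v hv
  have hμ : 0 ≤ v * (1 + ‖F‖ ^ 2) := by positivity
  have hrayleigh := re_star_dotProduct_mulVec_div_le_of_isHermitian
    (by simp [hSmat_eq _ hμ, IsHermitian, conjTranspose_sum, (hSk_herm _).eq]) (hη _ hμ).2 F
  have hG_le := hopt _ hμ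
  rw [hG_eq _ hμ, hG_eq _ hμhat] at hG_le
  rw [hP_eq F v hv, hP_eq _ _ (by positivity), norm_sq_mul_mul_one_add_norm_div_sq hE₁ hunit,
    Real.exp_le_exp, re_star_dotProduct_mulVec_div_eq_of_mulVec_eq hE₁ hev]
  gcongr K + _ * ?_
  linarith

/-- Multi-packet ML estimators in temporally correlated Rayleigh
fading: with C_H = Vᴴ diag(λ) V Hermitian PSD, sufficient statistics Y₁, Y₂ ∈ ℂ^{L×N},
per-eigencoordinate covariances C_k(F,v), sample matrices S_k, likelihood
P(F,v) = Π_k det(π C_k(F,v))^(−N) exp(−N Re Tr(S_k C_k(F,v)⁻¹)), and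
S(μ)ᵢⱼ = (1/N) Tr(μ C_H (μ C_H + σ² I)⁻¹ Y_i Y_jᴴ) with largest eigenvalue η(μ) and
G(μ) = η(μ) − σ² log det(μ C_H + σ² I): if μ̂ ≥ 0 maximizes G over [0,∞) and
(E₁, E₂) is a unit eigenvector of S(μ̂) for η(μ̂) with E₁ ≠ 0, then F̂ = E₂/E₁ and
v̂ = |E₁|²·μ̂ maximize P over all F ∈ ℂ and v ≥ 0. -/
theorem stmt11 (L N : ℕ) (hL : 1 ≤ L) (hN : 1 ≤ N) (σ2 : ℝ) (hσ : 0 < σ2)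
    (CH : Matrix (Fin L) (Fin L) ℂ) (hCH : CH.PosSemidef)
    (V : Matrix (Fin L) (Fin L) ℂ) (hV : V * Vᴴ = 1) (hV' : Vᴴ * V = 1)
    (lam : Fin L → ℝ) (hlam : ∀ k, 0 ≤ lam k)
    (hdecomp : CH = Vᴴ * Matrix.diagonal (fun k => ((lam k : ℝ) : ℂ)) * V)
    (Y₁ Y₂ : Matrix (Fin L) (Fin N) ℂ)
    (Ck : ℂ → ℝ → Fin L → Matrix (Fin 2) (Fin 2) ℂ)
    (hCk : ∀ F v k, Ck F v k =
      !![(v : ℂ) * (lam k : ℂ) + (σ2 : ℂ), (v : ℂ) * (lam k : ℂ) * (starRingEnd ℂ) F;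
         (v : ℂ) * (lam k : ℂ) * F, (v : ℂ) * (lam k : ℂ) * ((‖F‖ : ℝ) : ℂ) ^ 2 + (σ2 : ℂ)])
    (Sk : Fin L → Matrix (Fin 2) (Fin 2) ℂ)
    (hSk : ∀ k i j, Sk k i j =
      ((N : ℂ))⁻¹ * (V * (![Y₁, Y₂] i * (![Y₁, Y₂] j)ᴴ) * Vᴴ) k k)
    (P : ℂ → ℝ → ℝ)
    (hP : ∀ F v, P F v = ∏ k,
        ((((π : ℂ) • Ck F v k).det.re) ^ (-(N : ℤ))
          * Real.exp (-(N : ℝ) * ((Sk k * (Ck F v k)⁻¹).trace).re)))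
    (Smat : ℝ → Matrix (Fin 2) (Fin 2) ℂ)
    (hSmat : ∀ μ i j, Smat μ i j =
      ((N : ℂ))⁻¹ * (((μ : ℝ) : ℂ) • CH
          * (((μ : ℝ) : ℂ) • CH + ((σ2 : ℝ) : ℂ) • (1 : Matrix (Fin L) (Fin L) ℂ))⁻¹
          * (![Y₁, Y₂] i * (![Y₁, Y₂] j)ᴴ)).trace)
    (η : ℝ → ℝ)
    (hη : ∀ μ : ℝ, 0 ≤ μ →
      (∃ x : Fin 2 → ℂ, x ≠ 0 ∧ (Smat μ).mulVec x = ((η μ : ℝ) : ℂ) • x) ∧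
      (∀ t : ℝ, (∃ x : Fin 2 → ℂ, x ≠ 0 ∧ (Smat μ).mulVec x = ((t : ℝ) : ℂ) • x) → t ≤ η μ))
    (G : ℝ → ℝ)
    (hG : ∀ μ : ℝ, G μ = η μ
        - σ2 * Real.log ((((μ : ℝ) : ℂ) • CH
            + ((σ2 : ℝ) : ℂ) • (1 : Matrix (Fin L) (Fin L) ℂ)).det.re))
    (μhat : ℝ) (hμhat : 0 ≤ μhat) (hopt : ∀ μ : ℝ, 0 ≤ μ → G μ ≤ G μhat)
    (E₁ E₂ : ℂ) (hE₁ : E₁ ≠ 0)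
    (hunit : ‖E₁‖ ^ 2 + ‖E₂‖ ^ 2 = 1)
    (hev : (Smat μhat).mulVec ![E₁, E₂] = ((η μhat : ℝ) : ℂ) • ![E₁, E₂]) :
    ∀ F : ℂ, ∀ v : ℝ, 0 ≤ v →
      P F v ≤ P (E₂ / E₁) (‖E₁‖ ^ 2 * μhat) :=
  stmt11_general L N σ2 hσ CH V hV hV' lam hlam hdecomp Y₁ Y₂ Ck hCk Sk hSk P hP Smat hSmat η hη G
    hG μhat hμhat hopt E₁ E₂ hE₁ hunit hev
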